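/- arXiv:1602.00837 — 4 statements merged into one kernel-verified Lean document; each statement's English description precedes it below -/
import Mathlib

section
/- If f(x) is a polynomial over F_q (q = 2^n) such that f(x)+f(y)+f(z)+f(x+y+z) = 0 as a polynomial in F_q[x,y,z], then every monomial of f of degree ≥ 2 has degree a power of 2; i.e., f is a q-affine polynomial. -/
/-!
Substituting `z = 0` gives `f(x + y) = f(x) + f(y) - f(0)`, so `f(x + y)` has no mixed monomials.
The coefficient of `x^a y^b` in `f(x + y)` is `C(a + b, a) · f_{a+b}`, hence in characteristic `p`
a nonzero coefficient `f_k` forces `p ∣ C(k, a)` for all `0 < a < k`, and by Lucas' theorem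
this happens only when `k` is a power of `p`.
-/

open Polynomial

namespace Polynomial

variable {R : Type*} [CommRing R]

-- `R[X][X]` stands for `R[X, Y]`, with `Y = C X`.

theorem hasseDeriv_map_C (f : R[X]) (k : ℕ) :
    hasseDeriv k (f.map (C : R →+* R[X])) = (hasseDeriv k f).map C := by
  ext1 n
  simp [hasseDeriv_coeff, coeff_map]

theorem aeval_X_add_C_X_eq_taylor (f : R[X]) :
    aeval (X + C X : R[X][X]) f = taylor X (f.map C) := by
  rw [taylor_apply, comp, eval₂_map]
  rfl

theorem coeff_coeff_aeval_X_add_C_X (f : R[X]) (a b : ℕ) :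
    ((aeval (X + C X : R[X][X]) f).coeff a).coeff b = (a + b).choose a * f.coeff (a + b) := by
  rw [aeval_X_add_C_X_eq_taylor, taylor_coeff, hasseDeriv_map_C, eval_map, eval₂_C_X,
    hasseDeriv_coeff, add_comm b]

theorem natCast_choose_mul_coeff_eq_zero {f : R[X]}
    (hf : aeval (X + C X : R[X][X]) f = aeval X f + aeval (C X) f - aeval 0 f)
    {a b : ℕ} (ha : a ≠ 0) (hb : b ≠ 0) :
    ((a + b).choose a : R) * f.coeff (a + b) = 0 := by
  have hab := congrArg (fun g : R[X][X] ↦ (g.coeff a).coeff b) hf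
  have hX : aeval (X : R[X][X]) f = f.map C := rfl
  have h0 : aeval (0 : R[X][X]) f = C (C (f.coeff 0)) := by simp [aeval_def, eval₂_at_zero]
  rw [hX, h0, ← algebraMap_eq, aeval_algebraMap_apply, aeval_X_left_apply] at hab
  simpa [coeff_coeff_aeval_X_add_C_X, coeff_map, coeff_C, ha, hb] using hab

theorem eq_zero_or_eq_pow_multiplicity_of_coeff_ne_zero {p : ℕ} [hp : Fact p.Prime] [CharP R p]
    {f : R[X]} (hf : aeval (X + C X : R[X][X]) f = aeval X f + aeval (C X) f - aeval 0 f)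
    {k : ℕ} (hk : f.coeff k ≠ 0) :
    k = 0 ∨ k = p ^ multiplicity p k := by
  refine or_iff_not_imp_left.mpr fun hk0 ↦
    Choose.eq_pow_multiplicity_of_choose_modEq_zero_nat (Nat.pos_of_ne_zero hk0) fun a ha ↦ ?_
  rw [Finset.mem_Icc] at ha
  rw [Nat.modEq_zero_iff_dvd]
  by_contra hndvd
  have hunit := (CharP.isUnit_natCast_iff (R := R) hp.out).mpr hndvd
  have hchoose := natCast_choose_mul_coeff_eq_zero hf (a := a) (b := k - a) (by omega) (by omega)
  rw [Nat.add_sub_cancel' (by omega)] at hchoose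
  exact hk (hunit.mul_right_eq_zero.mp hchoose)

end Polynomial

open MvPolynomial in
theorem stmt2 (n : ℕ) (f : Polynomial (GaloisField 2 n))
    (h : Polynomial.aeval (X 0 : MvPolynomial (Fin 3) (GaloisField 2 n)) f
        + Polynomial.aeval (X 1 : MvPolynomial (Fin 3) (GaloisField 2 n)) f
        + Polynomial.aeval (X 2 : MvPolynomial (Fin 3) (GaloisField 2 n)) f
        + Polynomial.aeval (X 0 + X 1 + X 2 : MvPolynomial (Fin 3) (GaloisField 2 n)) f = 0) :
    ∀ k, f.coeff k ≠ 0 → k = 0 ∨ ∃ i : ℕ, k = 2 ^ i := by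
  set K := GaloisField 2 n
  have hz := congrArg
    (MvPolynomial.aeval ![(Polynomial.X : K[X][X]), Polynomial.C Polynomial.X, 0]) h
  simp only [map_add, map_zero, ← Polynomial.aeval_algHom_apply, MvPolynomial.aeval_X,
    Matrix.cons_val_zero, Matrix.cons_val_one, Matrix.cons_val_two, Matrix.head_cons,
    Matrix.tail_cons, add_zero] at hz
  have hf : Polynomial.aeval (Polynomial.X + Polynomial.C Polynomial.X : K[X][X]) f =
      Polynomial.aeval Polynomial.X f + Polynomial.aeval (Polynomial.C Polynomial.X) f
        - Polynomial.aeval 0 f := by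
    rw [CharTwo.sub_eq_add]
    exact (CharTwo.add_eq_zero.mp hz).symm
  exact fun k hk ↦ (eq_zero_or_eq_pow_multiplicity_of_coeff_ne_zero hf hk).imp_right
    fun hpow ↦ ⟨_, hpow⟩
end

section
/- Let q = 2^n and r an odd integer with r ≥ 3. Then (x+y)^2 does not divide the polynomial x^r + y^r + z^r + (x+y+z)^r in F_2[x,y,z]. -/
/-!
If `a ^ 2 ∣ f` then `a ∣ D f` for every derivation `D`. In characteristic 2 and for odd `r`,
`∂/∂x` of `x^r + y^r + z^r + (x+y+z)^r` is `x^(r-1) + (x+y+z)^(r-1)`; setting `y = x` kills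
`x + y` but leaves `x^(r-1) + z^(r-1) ≠ 0`, since `r - 1 > 0`.
-/

open MvPolynomial

theorem Derivation.dvd_of_sq_dvd {R A : Type*} [CommSemiring R] [CommSemiring A] [Algebra R A]
    (D : Derivation R A A) {a f : A} (h : a ^ 2 ∣ f) : a ∣ D f := by
  obtain ⟨q, rfl⟩ := h
  rw [D.leibniz, D.leibniz_pow, smul_eq_mul, smul_eq_mul, nsmul_eq_mul, smul_eq_mul]
  exact (dvd_mul_of_dvd_left (dvd_pow_self a two_ne_zero) _).add
    (dvd_mul_of_dvd_right (dvd_mul_of_dvd_right (dvd_mul_of_dvd_left (by simp) _) _) _)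

theorem Derivation.leibniz_pow_of_odd_of_two_eq_zero {R A : Type*} [CommSemiring R]
    [CommSemiring A] [Algebra R A] (D : Derivation R A A) (h2 : (2 : A) = 0) {n : ℕ}
    (hn : Odd n) (a : A) : D (a ^ n) = a ^ (n - 1) * D a := by
  rw [D.leibniz_pow, nsmul_eq_mul, natCast_eq_one_of_odd_of_two_eq_zero hn h2, one_mul,
    smul_eq_mul]

theorem MvPolynomial.X_pow_add_X_pow_ne_zero {σ R : Type*} [CommSemiring R] [Nontrivial R]
    {i j : σ} (hij : i ≠ j) {m : ℕ} (hm : m ≠ 0) :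
    (X i ^ m + X j ^ m : MvPolynomial σ R) ≠ 0 := by
  classical
  intro h
  have hcoeff := congrArg (coeff (Finsupp.single i m)) h
  rw [coeff_add, coeff_X_pow, coeff_X_pow, if_pos rfl, if_neg, coeff_zero] at hcoeff
  · simp at hcoeff
  · exact fun hs => hij ((Finsupp.single_left_inj hm).mp hs).symm

open MvPolynomial in
theorem stmt4 (r : ℕ) (hr : Odd r) (hr3 : 3 ≤ r) :
    ¬ (((X 0 + X 1 : MvPolynomial (Fin 3) (ZMod 2)) ^ 2) ∣
      (X 0 ^ r + X 1 ^ r + X 2 ^ r + (X 0 + X 1 + X 2) ^ r)) := by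
  intro hdvd
  have h2 : (2 : MvPolynomial (Fin 3) (ZMod 2)) = 0 := CharTwo.two_eq_zero
  have hderiv := (pderiv (R := ZMod 2) (0 : Fin 3)).dvd_of_sq_dvd hdvd
  simp only [map_add, (pderiv 0).leibniz_pow_of_odd_of_two_eq_zero h2 hr, pderiv_X_self,
    pderiv_X_of_ne (by decide : (1 : Fin 3) ≠ 0), pderiv_X_of_ne (by decide : (2 : Fin 3) ≠ 0),
    mul_zero, mul_one, add_zero] at hderiv
  have hdiag := map_dvd
    (aeval (R := ZMod 2) (![X 0, X 0, X 2] : Fin 3 → MvPolynomial (Fin 3) (ZMod 2))) hderiv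
  simp only [aeval_X, map_add, map_pow, Matrix.cons_val_zero, Matrix.cons_val_one,
    Matrix.cons_val, CharTwo.add_self_eq_zero, zero_add, zero_dvd_iff] at hdiag
  exact X_pow_add_X_pow_ne_zero (by decide : (0 : Fin 3) ≠ 2) (by omega : r - 1 ≠ 0) hdiag
end

section
/- Let r ≥ 3 be an odd integer and let φ_r(x,y,z) = (x^r + y^r + z^r + (x+y+z)^r)/((x+y)(x+z)(y+z)) in F_2[x,y,z]. Then (x+y) does not divide φ_r. -/
/-!
If `(x + y) ∣ φ_r`, then `(x + y)^2` divides `x^r + y^r + z^r + (x + y + z)^r`, so `x + y` divides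
its `∂/∂y`. In characteristic 2 and for odd `r` that derivative is `y^(r-1) + (x + y + z)^(r-1)`,
which takes the value `1` at `(1, 1, 0)`, where `x + y` vanishes.
-/

namespace Derivation

variable {R A : Type*} [CommSemiring R] [CommSemiring A] [Algebra R A]

theorem dvd_apply_of_sq_dvd (D : Derivation R A A) {p f : A} (h : p ^ 2 ∣ f) : p ∣ D f := by
  obtain ⟨g, rfl⟩ := h
  rw [leibniz, leibniz_pow, smul_eq_mul, smul_eq_mul, smul_eq_mul, nsmul_eq_mul]
  exact ⟨p * D g + g * (2 * D p), by ring⟩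

theorem leibniz_pow_of_odd_of_two_eq_zero_s5 (D : Derivation R A A) (a : A) {n : ℕ} (hn : Odd n)
    (h2 : (2 : A) = 0) : D (a ^ n) = a ^ (n - 1) * D a := by
  rw [leibniz_pow, nsmul_eq_mul, natCast_eq_one_of_odd_of_two_eq_zero hn h2, one_mul,
    smul_eq_mul]

end Derivation

open MvPolynomial in
theorem stmt5 (r : ℕ) (hr : Odd r) (hr3 : 3 ≤ r) (φ : MvPolynomial (Fin 3) (ZMod 2))
    (hφ : ((X 0 + X 1) * (X 0 + X 2) * (X 1 + X 2)) * φ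
        = X 0 ^ r + X 1 ^ r + X 2 ^ r + (X 0 + X 1 + X 2) ^ r) :
    ¬ ((X 0 + X 1 : MvPolynomial (Fin 3) (ZMod 2)) ∣ φ) := by
  rintro ⟨ψ, rfl⟩
  have hsq : (X 0 + X 1 : MvPolynomial (Fin 3) (ZMod 2)) ^ 2 ∣
      X 0 ^ r + X 1 ^ r + X 2 ^ r + (X 0 + X 1 + X 2) ^ r :=
    hφ ▸ ⟨(X 0 + X 2) * (X 1 + X 2) * ψ, by ring⟩
  have h2 : (2 : MvPolynomial (Fin 3) (ZMod 2)) = 0 := CharTwo.two_eq_zero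
  have hderiv : pderiv 1 (X 0 ^ r + X 1 ^ r + X 2 ^ r + (X 0 + X 1 + X 2) ^ r)
      = (X 1 ^ (r - 1) + (X 0 + X 1 + X 2) ^ (r - 1) : MvPolynomial (Fin 3) (ZMod 2)) := by
    simp [Derivation.leibniz_pow_of_odd_of_two_eq_zero_s5 _ _ hr h2, pderiv_X]
  obtain ⟨q, hq⟩ := hderiv ▸ (pderiv 1).dvd_apply_of_sq_dvd hsq
  have hq_eval := congrArg (eval ![1, 1, 0]) hq
  simp [CharTwo.add_self_eq_zero, zero_pow (by omega : r - 1 ≠ 0)] at hq_eval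
end

section
/- Let q = 2^n and c ∈ F_{q^3} with c + c^q + c^{q^2} = 0 and c ≠ 0. Then the map L : F_{q^3} → F_{q^3}, L(x) = x(x+c)(x+c^q)(x+c^{q^2}), has 0 as its only zero in F_{q^3}, hence (being F_2-linear) is a bijection of F_{q^3}. -/
/-!
Write `q = 2 ^ n` and `σ x = x ^ q`. Because `c + σ c + σ² c = 0`, the quartic
`x (x + c) (x + σ c) (x + σ² c)` has no cubic term, so in characteristic 2 it is additive.
Since `σ³ c = c`, `σ` permutes its roots, so the quartic commutes with `σ` and preserves
`F_q = {x | σ x = x}`. A nonzero root in `F_q` would be a `σ`-fixed conjugate `σⁱ c`, and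
injectivity of `σ` would then make `c` itself fixed. An additive map with trivial kernel on the
finite set `F_q` is a bijection of it.
-/

open Set

section

variable {R : Type*} [CommRing R]

def conjQuartic (q : ℕ) (c x : R) : R :=
  x * (x + c) * (x + c ^ q) * (x + c ^ q ^ 2)

theorem conjQuartic_add [CharP R 2] {q : ℕ} {c : R} (hc : c + c ^ q + c ^ q ^ 2 = 0)
    (x y : R) : conjQuartic q c (x + y) = conjQuartic q c x + conjQuartic q c y := by
  have h2 : (2 : R) = 0 := CharTwo.two_eq_zero
  unfold conjQuartic
  linear_combination (3 * x ^ 2 * y + 3 * x * y ^ 2) * hc +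
    (2 * x ^ 3 * y + 3 * x ^ 2 * y ^ 2 + 2 * x * y ^ 3 +
      x * y * (c * c ^ q + c * c ^ q ^ 2 + c ^ q * c ^ q ^ 2)) * h2

theorem conjQuartic_pow_expChar_pow {p k : ℕ} [ExpChar R p] {c : R}
    (hc : c ^ (p ^ k) ^ 3 = c) (x : R) :
    conjQuartic (p ^ k) c x ^ p ^ k = conjQuartic (p ^ k) c (x ^ p ^ k) := by
  have hc2 : (c ^ p ^ k) ^ p ^ k = c ^ (p ^ k) ^ 2 := by rw [← pow_mul, ← sq]
  have hc3 : (c ^ (p ^ k) ^ 2) ^ p ^ k = c := by rw [← pow_mul, ← pow_succ, hc]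
  simp only [conjQuartic, mul_pow, add_pow_expChar_pow, hc2, hc3]
  ring

theorem pow_expChar_pow_eq_self_of_conj [IsReduced R] {p k : ℕ} [ExpChar R p] {c : R} (i : ℕ)
    (h : (c ^ (p ^ k) ^ i) ^ p ^ k = c ^ (p ^ k) ^ i) : c ^ p ^ k = c := by
  apply iterateFrobenius_inj R p (k * i)
  rwa [iterateFrobenius_def, iterateFrobenius_def, pow_mul, ← pow_mul, mul_comm, pow_mul]

theorem conjQuartic_eq_zero_iff [IsDomain R] [CharP R 2] {k : ℕ} {c x : R}
    (hx : x ^ 2 ^ k = x) (hcq : c ^ 2 ^ k ≠ c) : conjQuartic (2 ^ k) c x = 0 ↔ x = 0 := by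
  refine ⟨fun h => ?_, fun h => by simp [conjQuartic, h]⟩
  have hconj (i : ℕ) (hi : x = c ^ (2 ^ k) ^ i) : False :=
    hcq (pow_expChar_pow_eq_self_of_conj i (hi ▸ hx))
  simp only [conjQuartic, mul_eq_zero, CharTwo.add_eq_zero] at h
  rcases h with ((h | h) | h) | h
  · exact h
  · exact (hconj 0 (by simpa using h)).elim
  · exact (hconj 1 (by simpa using h)).elim
  · exact (hconj 2 h).elim

end

theorem conjQuartic_bijOn {K : Type*} [Field K] [Finite K] [CharP K 2] {k : ℕ} {c : K}
    (hc : c + c ^ 2 ^ k + c ^ (2 ^ k) ^ 2 = 0) (hc3 : c ^ (2 ^ k) ^ 3 = c)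
    (hcq : c ^ 2 ^ k ≠ c) :
    BijOn (conjQuartic (2 ^ k) c) {x | x ^ 2 ^ k = x} {x | x ^ 2 ^ k = x} := by
  have hmaps : MapsTo (conjQuartic (2 ^ k) c) {x | x ^ 2 ^ k = x} {x | x ^ 2 ^ k = x} :=
    fun x (hx : x ^ 2 ^ k = x) => show _ = _ by rw [conjQuartic_pow_expChar_pow hc3, hx]
  refine (toFinite _).injOn_iff_bijOn_of_mapsTo hmaps |>.mp fun x hx y hy hxy => ?_
  have hfixed : (x + y) ^ 2 ^ k = x + y := by rw [add_pow_char_pow, hx, hy]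
  have hzero : conjQuartic (2 ^ k) c (x + y) = 0 := by
    rw [conjQuartic_add hc, hxy, CharTwo.add_self_eq_zero]
  exact CharTwo.add_eq_zero.mp ((conjQuartic_eq_zero_iff hfixed hcq).mp hzero)

theorem stmt12_general (n : ℕ) (c : GaloisField 2 (3 * n))
    (hc : c + c ^ (2 ^ n) + c ^ ((2 ^ n) ^ 2) = 0)
    (hcq : c ^ (2 ^ n) ≠ c) :
    (∀ x : GaloisField 2 (3 * n), x ^ (2 ^ n) = x →
        (x * (x + c) * (x + c ^ (2 ^ n)) * (x + c ^ ((2 ^ n) ^ 2)) = 0 ↔ x = 0)) ∧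
    Set.BijOn (fun x : GaloisField 2 (3 * n) =>
        x * (x + c) * (x + c ^ (2 ^ n)) * (x + c ^ ((2 ^ n) ^ 2)))
      {x | x ^ (2 ^ n) = x} {x | x ^ (2 ^ n) = x} := by
  have hn : n ≠ 0 := by
    rintro rfl
    exact hcq (pow_one c)
  have hc3 : c ^ (2 ^ n) ^ 3 = c := by
    have hcard : Nat.card (GaloisField 2 (3 * n)) = (2 ^ n) ^ 3 := by
      rw [GaloisField.card 2 _ (by omega), ← pow_mul, mul_comm]
    have := Fintype.ofFinite (GaloisField 2 (3 * n))
    rw [← hcard, Nat.card_eq_fintype_card, FiniteField.pow_card]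
  exact ⟨fun x hx => conjQuartic_eq_zero_iff hx hcq, conjQuartic_bijOn hc hc3 hcq⟩

theorem stmt12 (n : ℕ) (hn : 0 < n) (c : GaloisField 2 (3 * n))
    (hc : c + c ^ (2 ^ n) + c ^ ((2 ^ n) ^ 2) = 0)
    (hcq : c ^ (2 ^ n) ≠ c) :
    (∀ x : GaloisField 2 (3 * n), x ^ (2 ^ n) = x →
        (x * (x + c) * (x + c ^ (2 ^ n)) * (x + c ^ ((2 ^ n) ^ 2)) = 0 ↔ x = 0)) ∧
    Set.BijOn (fun x : GaloisField 2 (3 * n) =>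
        x * (x + c) * (x + c ^ (2 ^ n)) * (x + c ^ ((2 ^ n) ^ 2)))
      {x | x ^ (2 ^ n) = x} {x | x ^ (2 ^ n) = x} :=
  stmt12_general n c hc hcq
end
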